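/- arXiv:2110.06509 — 7 statements merged into one kernel-verified Lean document; each statement's English description precedes it below -/
import Mathlib

section
/- Suppose f: ℝⁿ → ℝⁿ is differentiable, and there exist a differentiable φ: ℝⁿ → ℝ^N with Jacobian Φ(x) of full column rank for all x, constants a₁, a₂ > 0 with a₁ I ⪯ Φ(x)ᵀΦ(x) ⪯ a₂ I, a matrix A with φ∘f = A φ, and a symmetric P ≻ 0 with P - AᵀPA ⪰ ρP for some ρ ∈ (0,1). Then M(x) := Φ(x)ᵀPΦ(x) satisfies the contraction condition: F(x)ᵀ M(f(x)) F(x) - M(x) ⪯ -β M(x) for all x, with β = ρ λ_min(P)/λ_max(P) ∈ (0,1). -/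
/-!
Differentiating the Koopman identity `φ ∘ f = A ∘ φ` gives `Φ (f x) F x = A Φ x`, so the
pulled-back metric satisfies `F(x)ᵀ M(f x) F(x) = Φ(x)ᵀ AᵀPA Φ(x)`. The Lyapunov inequality
`AᵀPA ⪯ (1 - ρ) P` is preserved under congruence by `Φ(x)`, and weakening `ρ` to
`β = ρ λ_min / λ_max ≤ ρ` gives the contraction inequality.
-/

open Matrix

namespace Matrix

section Eigenvalues

variable {ι : Type*} [Fintype ι] [DecidableEq ι] [Nonempty ι] {P : Matrix ι ι ℝ}

lemma PosDef.iInf_eigenvalues_pos (hP : P.PosDef) : 0 < ⨅ i, hP.1.eigenvalues i := by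
  obtain ⟨i, hi⟩ := exists_eq_ciInf_of_finite (f := hP.1.eigenvalues)
  exact hi ▸ hP.eigenvalues_pos i

lemma IsHermitian.iInf_eigenvalues_le_iSup (hP : P.IsHermitian) :
    ⨅ i, hP.eigenvalues i ≤ ⨆ i, hP.eigenvalues i :=
  ciInf_le_ciSup (Finite.bddBelow_range _) (Finite.bddAbove_range _)

end Eigenvalues

section Lyapunov

variable {ι κ : Type*} [Fintype ι] [Fintype κ] {P A : Matrix ι ι ℝ} {ρ β : ℝ}

lemma PosSemidef.lyapunov_of_le (hP : P.PosSemidef) (hLyap : (P - Aᵀ * P * A - ρ • P).PosSemidef)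
    (hβρ : β ≤ ρ) : ((1 - β) • P - Aᵀ * P * A).PosSemidef := by
  have h := hLyap.add (hP.smul (sub_nonneg.mpr hβρ))
  rwa [show P - Aᵀ * P * A - ρ • P + (ρ - β) • P = (1 - β) • P - Aᵀ * P * A by module] at h

lemma PosSemidef.lyapunov_congr (hP : P.PosSemidef) (hLyap : (P - Aᵀ * P * A - ρ • P).PosSemidef)
    (hβρ : β ≤ ρ) (B : Matrix ι κ ℝ) :
    ((1 - β) • (Bᵀ * P * B) - (A * B)ᵀ * P * (A * B)).PosSemidef := by
  have h := (hP.lyapunov_of_le hLyap hβρ).conjTranspose_mul_mul_same B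
  rw [conjTranspose_eq_transpose_of_trivial] at h
  convert h using 1
  simp only [transpose_mul, Matrix.mul_sub, Matrix.sub_mul, Matrix.mul_smul, Matrix.smul_mul,
    Matrix.mul_assoc]

end Lyapunov

end Matrix

section Koopman

variable {𝕜 : Type*} [NontriviallyNormedField 𝕜] [CompleteSpace 𝕜]
  {m p : Type*} [Fintype m] [DecidableEq m] [Fintype p]

theorem jacobian_mul_eq_of_comp_eq_mulVec {f : (m → 𝕜) → m → 𝕜} {φ : (m → 𝕜) → p → 𝕜}
    {F : (m → 𝕜) → Matrix m m 𝕜} {Φ : (m → 𝕜) → Matrix p m 𝕜} {A : Matrix p p 𝕜}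
    (hf : ∀ x, HasFDerivAt f (LinearMap.toContinuousLinearMap (F x).mulVecLin) x)
    (hφ : ∀ x, HasFDerivAt φ (LinearMap.toContinuousLinearMap (Φ x).mulVecLin) x)
    (hAeq : ∀ x, φ (f x) = A *ᵥ φ x) (x : m → 𝕜) :
    Φ (f x) * F x = A * Φ x := by
  have hcomp : φ ∘ f = (LinearMap.toContinuousLinearMap A.mulVecLin) ∘ φ := funext hAeq
  have h₁ := (hφ (f x)).comp x (hf x)
  have h₂ := (LinearMap.toContinuousLinearMap A.mulVecLin).hasFDerivAt.comp x (hφ x)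
  rw [← hcomp] at h₂
  have h := congrArg ContinuousLinearMap.toLinearMap (h₁.unique h₂)
  simp only [ContinuousLinearMap.toLinearMap_comp, LinearMap.coe_toContinuousLinearMap,
    ← Matrix.mulVecLin_mul] at h
  exact Matrix.toLin'.injective (by simpa only [Matrix.toLin'_apply'] using h)

end Koopman

theorem stmt5_general {n N : ℕ} (hN : 0 < N)
    (f : (Fin n → ℝ) → (Fin n → ℝ))
    (φ : (Fin n → ℝ) → (Fin N → ℝ))
    (F : (Fin n → ℝ) → Matrix (Fin n) (Fin n) ℝ)
    (Φ : (Fin n → ℝ) → Matrix (Fin N) (Fin n) ℝ)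
    (A : Matrix (Fin N) (Fin N) ℝ)
    (P : Matrix (Fin N) (Fin N) ℝ)
    (ρ : ℝ) (hρ : ρ ∈ Set.Ioo (0 : ℝ) 1)
    (hf : ∀ x, HasFDerivAt f (LinearMap.toContinuousLinearMap (F x).mulVecLin) x)
    (hφ : ∀ x, HasFDerivAt φ (LinearMap.toContinuousLinearMap (Φ x).mulVecLin) x)
    (hAeq : ∀ x, φ (f x) = A.mulVec (φ x))
    (hP : P.PosDef)
    (hLyap : (P - Aᵀ * P * A - ρ • P).PosSemidef) :
    0 < ρ * (⨅ i, hP.1.eigenvalues i) / (⨆ i, hP.1.eigenvalues i) ∧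
    ρ * (⨅ i, hP.1.eigenvalues i) / (⨆ i, hP.1.eigenvalues i) < 1 ∧
    ∀ x,
      ((1 - ρ * (⨅ i, hP.1.eigenvalues i) / (⨆ i, hP.1.eigenvalues i)) •
          ((Φ x)ᵀ * P * Φ x) -
        (F x)ᵀ * ((Φ (f x))ᵀ * P * Φ (f x)) * F x).PosSemidef := by
  have : Nonempty (Fin N) := ⟨⟨0, hN⟩⟩
  obtain ⟨hρ₀, hρ₁⟩ := hρ
  have hmin := hP.iInf_eigenvalues_pos
  have hmax := hmin.trans_le hP.1.iInf_eigenvalues_le_iSup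
  have hβρ : ρ * (⨅ i, hP.1.eigenvalues i) / (⨆ i, hP.1.eigenvalues i) ≤ ρ := by
    rw [div_le_iff₀ hmax]
    exact mul_le_mul_of_nonneg_left hP.1.iInf_eigenvalues_le_iSup hρ₀.le
  refine ⟨by positivity, hβρ.trans_lt hρ₁, fun x ↦ ?_⟩
  have h := hP.posSemidef.lyapunov_congr hLyap hβρ (Φ x)
  rw [← jacobian_mul_eq_of_comp_eq_mulVec hf hφ hAeq x] at h
  convert h using 2
  simp only [transpose_mul, Matrix.mul_assoc]

theorem stmt5 {n N : ℕ} (hN : 0 < N)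
    (f : (Fin n → ℝ) → (Fin n → ℝ))
    (φ : (Fin n → ℝ) → (Fin N → ℝ))
    (F : (Fin n → ℝ) → Matrix (Fin n) (Fin n) ℝ)
    (Φ : (Fin n → ℝ) → Matrix (Fin N) (Fin n) ℝ)
    (A : Matrix (Fin N) (Fin N) ℝ)
    (P : Matrix (Fin N) (Fin N) ℝ)
    (a₁ a₂ ρ : ℝ) (ha₁ : 0 < a₁) (ha₂ : 0 < a₂) (hρ : ρ ∈ Set.Ioo (0 : ℝ) 1)
    (hf : ∀ x, HasFDerivAt f (LinearMap.toContinuousLinearMap (F x).mulVecLin) x)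
    (hφ : ∀ x, HasFDerivAt φ (LinearMap.toContinuousLinearMap (Φ x).mulVecLin) x)
    (hrank : ∀ x, (Φ x).rank = n)
    (hlow : ∀ x, ((Φ x)ᵀ * Φ x - a₁ • (1 : Matrix (Fin n) (Fin n) ℝ)).PosSemidef)
    (hup : ∀ x, (a₂ • (1 : Matrix (Fin n) (Fin n) ℝ) - (Φ x)ᵀ * Φ x).PosSemidef)
    (hAeq : ∀ x, φ (f x) = A.mulVec (φ x))
    (hPsymm : Pᵀ = P) (hP : P.PosDef)
    (hLyap : (P - Aᵀ * P * A - ρ • P).PosSemidef) :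
    0 < ρ * (⨅ i, hP.1.eigenvalues i) / (⨆ i, hP.1.eigenvalues i) ∧
    ρ * (⨅ i, hP.1.eigenvalues i) / (⨆ i, hP.1.eigenvalues i) < 1 ∧
    ∀ x,
      ((1 - ρ * (⨅ i, hP.1.eigenvalues i) / (⨆ i, hP.1.eigenvalues i)) •
          ((Φ x)ᵀ * P * Φ x) -
        (F x)ᵀ * ((Φ (f x))ᵀ * P * Φ (f x)) * F x).PosSemidef :=
  stmt5_general hN f φ F Φ A P ρ hρ hf hφ hAeq hP hLyap
end

section
/- Let M: ℝⁿ → ℝ^{n×n} assign symmetric matrices with a₁I ⪯ M(x) ⪯ a₂I for constants a₂ ≥ a₁ > 0, and suppose f: ℝⁿ → ℝⁿ is differentiable with Df(x)ᵀ M(f(x)) Df(x) ⪯ (1-β) M(x) for all x and some β ∈ (0,1). Then f is a contraction in the Euclidean norm up to a constant: for all x, y and all k, |fᵏ(x) - fᵏ(y)| ≤ √(a₂/a₁) (1-β)^{k/2} |x - y|, where fᵏ is the k-fold iterate. -/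
open Matrix

/-- Product of Jacobians along the orbit: the Jacobian of `f^[k]` at `z`. -/
def DkAux {n : ℕ} (f : EuclideanSpace ℝ (Fin n) → EuclideanSpace ℝ (Fin n))
    (Df : EuclideanSpace ℝ (Fin n) → Matrix (Fin n) (Fin n) ℝ) :
    ℕ → EuclideanSpace ℝ (Fin n) → Matrix (Fin n) (Fin n) ℝ
  | 0, _ => 1
  | (k+1), z => Df (f^[k] z) * DkAux f Df k z

/-- Real quadratic form nonnegativity from positive semidefiniteness. -/
lemma psd_quad {n : ℕ} {P : Matrix (Fin n) (Fin n) ℝ} (h : P.PosSemidef) (v : Fin n → ℝ) :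
    0 ≤ v ⬝ᵥ (P *ᵥ v) := by simpa using h.dotProduct_mulVec_nonneg v

/-- The chain rule for iterates. -/
lemma dk_deriv {n : ℕ}
    (f : EuclideanSpace ℝ (Fin n) → EuclideanSpace ℝ (Fin n))
    (Df : EuclideanSpace ℝ (Fin n) → Matrix (Fin n) (Fin n) ℝ)
    (hf : ∀ x, HasFDerivAt f
      (LinearMap.toContinuousLinearMap (Matrix.toEuclideanLin (Df x))) x) :
    ∀ k z, HasFDerivAt (f^[k])
      (LinearMap.toContinuousLinearMap (Matrix.toEuclideanLin (DkAux f Df k z))) z := by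
  intro k
  induction k with
  | zero =>
    intro z
    have h : HasFDerivAt (f^[0]) (ContinuousLinearMap.id ℝ (EuclideanSpace ℝ (Fin n))) z := by
      simpa using hasFDerivAt_id z
    convert h using 1
    ext v i
    simp [DkAux, Matrix.toEuclideanLin_apply]
  | succ k ih =>
    intro z
    have h := (hf (f^[k] z)).comp z (ih z)
    rw [← Function.iterate_succ'] at h
    refine h.congr_fderiv ?_
    ext v i
    simp [DkAux, Matrix.toEuclideanLin_apply, ← Matrix.mulVec_mulVec]

/-- Iterated contraction of the quadratic form in the metric `M`. -/
lemma dk_quad {n : ℕ}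
    (f : EuclideanSpace ℝ (Fin n) → EuclideanSpace ℝ (Fin n))
    (Df M : EuclideanSpace ℝ (Fin n) → Matrix (Fin n) (Fin n) ℝ)
    (β : ℝ) (hβ : β ∈ Set.Ioo (0:ℝ) 1)
    (hcontr : ∀ x,
      ((1 - β) • M x - (Df x)ᵀ * M (f x) * Df x).PosSemidef) :
    ∀ k (z : EuclideanSpace ℝ (Fin n)) (v : Fin n → ℝ),
      (DkAux f Df k z *ᵥ v) ⬝ᵥ (M (f^[k] z) *ᵥ (DkAux f Df k z *ᵥ v))
        ≤ (1-β)^k * (v ⬝ᵥ (M z *ᵥ v)) := by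
  intro k
  induction k with
  | zero => intro z v; simp [DkAux]
  | succ k ih =>
    intro z v
    set u := DkAux f Df k z *ᵥ v with hu
    have h1 := psd_quad (hcontr (f^[k] z)) u
    have h2 : u ⬝ᵥ (((Df (f^[k] z))ᵀ * M (f (f^[k] z)) * Df (f^[k] z)) *ᵥ u)
        = (Df (f^[k] z) *ᵥ u) ⬝ᵥ (M (f (f^[k] z)) *ᵥ (Df (f^[k] z) *ᵥ u)) := by
      rw [← Matrix.mulVec_mulVec, ← Matrix.mulVec_mulVec, Matrix.dotProduct_mulVec,
        Matrix.vecMul_transpose]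
    rw [Matrix.sub_mulVec, dotProduct_sub, sub_nonneg, Matrix.smul_mulVec,
      dotProduct_smul, h2] at h1
    have h3 := ih z v
    calc (DkAux f Df (k+1) z *ᵥ v) ⬝ᵥ (M (f^[k+1] z) *ᵥ (DkAux f Df (k+1) z *ᵥ v))
        = (Df (f^[k] z) *ᵥ u) ⬝ᵥ (M (f (f^[k] z)) *ᵥ (Df (f^[k] z) *ᵥ u)) := by
          rw [Function.iterate_succ_apply']
          simp [DkAux, ← Matrix.mulVec_mulVec, hu]
      _ ≤ (1-β) • (u ⬝ᵥ (M (f^[k] z) *ᵥ u)) := h1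
      _ ≤ (1-β) * ((1-β)^k * (v ⬝ᵥ (M z *ᵥ v))) := by
          rw [smul_eq_mul]
          exact mul_le_mul_of_nonneg_left h3 (by linarith [hβ.2])
      _ = (1-β)^(k+1) * (v ⬝ᵥ (M z *ᵥ v)) := by ring

/-- Squared Euclidean norm as dot product. -/
lemma norm_sq_eq_dot {n : ℕ} (u : EuclideanSpace ℝ (Fin n)) :
    ‖u‖ ^ 2 = (u : Fin n → ℝ) ⬝ᵥ (u : Fin n → ℝ) := by
  rw [← real_inner_self_eq_norm_sq]
  simp [PiLp.inner_apply, dotProduct, RCLike.inner_apply, mul_comm]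
  rw [EuclideanSpace.norm_sq_eq]
  simp [pow_two]

theorem stmt6 {n : ℕ}
    (f : EuclideanSpace ℝ (Fin n) → EuclideanSpace ℝ (Fin n))
    (Df : EuclideanSpace ℝ (Fin n) → Matrix (Fin n) (Fin n) ℝ)
    (M : EuclideanSpace ℝ (Fin n) → Matrix (Fin n) (Fin n) ℝ)
    (a₁ a₂ β : ℝ) (ha₁ : 0 < a₁) (ha₁₂ : a₁ ≤ a₂) (hβ : β ∈ Set.Ioo (0 : ℝ) 1)
    (hMsymm : ∀ x, (M x)ᵀ = M x)
    (hMlow : ∀ x, (M x - a₁ • (1 : Matrix (Fin n) (Fin n) ℝ)).PosSemidef)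
    (hMup : ∀ x, (a₂ • (1 : Matrix (Fin n) (Fin n) ℝ) - M x).PosSemidef)
    (hf : ∀ x, HasFDerivAt f
      (LinearMap.toContinuousLinearMap (Matrix.toEuclideanLin (Df x))) x)
    (hcontr : ∀ x,
      ((1 - β) • M x - (Df x)ᵀ * M (f x) * Df x).PosSemidef) :
    ∀ x y : EuclideanSpace ℝ (Fin n), ∀ k : ℕ,
      ‖f^[k] x - f^[k] y‖ ≤ Real.sqrt (a₂ / a₁) * Real.sqrt (1 - β) ^ k * ‖x - y‖ := by
  intro x y k
  set C : ℝ := Real.sqrt (a₂ / a₁) * Real.sqrt (1 - β) ^ k with hC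
  have hβ1 : (0:ℝ) ≤ 1 - β := by linarith [hβ.2]
  have hC0 : 0 ≤ C := mul_nonneg (Real.sqrt_nonneg _) (pow_nonneg (Real.sqrt_nonneg _) _)
  have hCsq : C ^ 2 = a₂ / a₁ * (1 - β) ^ k := by
    rw [hC, mul_pow, ← pow_mul, mul_comm k 2, pow_mul,
      Real.sq_sqrt (div_nonneg (le_trans ha₁.le ha₁₂) ha₁.le), Real.sq_sqrt hβ1]
  -- operator norm bound on the derivative of `f^[k]` at every point
  have hbound : ∀ z : EuclideanSpace ℝ (Fin n),
      ‖LinearMap.toContinuousLinearMap (Matrix.toEuclideanLin (DkAux f Df k z))‖ ≤ C := by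
    intro z
    apply ContinuousLinearMap.opNorm_le_bound _ hC0
    intro v
    set B := DkAux f Df k z with hB
    set w : EuclideanSpace ℝ (Fin n) := LinearMap.toContinuousLinearMap
      (Matrix.toEuclideanLin B) v with hw
    have hwv : (w : Fin n → ℝ) = B *ᵥ (v : Fin n → ℝ) := by
      funext i
      rfl
    -- lower bound: a₁ ‖w‖² ≤ wᵀ M(f^[k] z) w
    have hlow : a₁ * (w ⬝ᵥ (w : Fin n → ℝ)) ≤ (w : Fin n → ℝ) ⬝ᵥ (M (f^[k] z) *ᵥ w) := by
      have := psd_quad (hMlow (f^[k] z)) w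
      rw [Matrix.sub_mulVec, dotProduct_sub, sub_nonneg, Matrix.smul_mulVec,
        dotProduct_smul, Matrix.one_mulVec, smul_eq_mul] at this
      exact this
    -- upper bound: vᵀ M(z) v ≤ a₂ ‖v‖²
    have hup : (v : Fin n → ℝ) ⬝ᵥ (M z *ᵥ v) ≤ a₂ * (v ⬝ᵥ (v : Fin n → ℝ)) := by
      have := psd_quad (hMup z) v
      rw [Matrix.sub_mulVec, dotProduct_sub, sub_nonneg, Matrix.smul_mulVec,
        dotProduct_smul, Matrix.one_mulVec, smul_eq_mul] at this
      exact this
    have hmid : (w : Fin n → ℝ) ⬝ᵥ (M (f^[k] z) *ᵥ w) ≤ (1-β)^k * ((v : Fin n → ℝ) ⬝ᵥ (M z *ᵥ v)) := by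
      have := dk_quad f Df M β hβ hcontr k z v
      rw [hwv]
      exact this
    have hwsq : ‖w‖ ^ 2 = (w : Fin n → ℝ) ⬝ᵥ (w : Fin n → ℝ) := norm_sq_eq_dot w
    have hvsq : ‖v‖ ^ 2 = (v : Fin n → ℝ) ⬝ᵥ (v : Fin n → ℝ) := norm_sq_eq_dot v
    have hkey : ‖w‖ ^ 2 ≤ C ^ 2 * ‖v‖ ^ 2 := by
      rw [hwsq, hvsq, hCsq]
      have ha₂0 : (0:ℝ) ≤ a₂ := le_trans ha₁.le ha₁₂
      have hpow : (0:ℝ) ≤ (1-β)^k := pow_nonneg hβ1 k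
      have h4 : a₁ * ((w : Fin n → ℝ) ⬝ᵥ w) ≤ (1-β)^k * (a₂ * ((v : Fin n → ℝ) ⬝ᵥ v)) :=
        le_trans hlow (le_trans hmid (mul_le_mul_of_nonneg_left hup hpow))
      rw [div_mul_eq_mul_div, div_mul_eq_mul_div, le_div_iff₀ ha₁]
      nlinarith
    -- conclude ‖w‖ ≤ C * ‖v‖
    nlinarith [norm_nonneg w, norm_nonneg v, mul_nonneg hC0 (norm_nonneg v),
      sq_nonneg (‖w‖ - C * ‖v‖)]
  have := Convex.norm_image_sub_le_of_norm_hasFDerivWithin_le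
    (f := f^[k]) (s := Set.univ)
    (f' := fun z => LinearMap.toContinuousLinearMap (Matrix.toEuclideanLin (DkAux f Df k z)))
    (fun z _ => (dk_deriv f Df hf k z).hasFDerivWithinAt)
    (fun z _ => hbound z) convex_univ (Set.mem_univ y) (Set.mem_univ x)
  exact this
end

section
/- Let f: ℝⁿ → ℝⁿ be differentiable with a fixed point x⋆, and suppose M: ℝⁿ → ℝ^{n×n} takes symmetric positive definite values with Df(x)ᵀ M(f(x)) Df(x) - M(x) ⪯ -β M(x) for all x and some β ∈ (0,1). Then the matrix A := Df(x⋆) satisfies AᵀM(x⋆)A ⪯ (1-β) M(x⋆), and consequently A is Schur stable. -/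
open Matrix

def SchurStable {N : ℕ} (A : Matrix (Fin N) (Fin N) ℝ) : Prop :=
  ∀ μ ∈ spectrum ℂ (A.map Complex.ofReal), ‖μ‖ < 1

/-!
At the fixed point the contraction hypothesis becomes the Stein inequality
`Aᵀ S A ⪯ (1 - β) S` with `S = M x⋆ ≻ 0` and `A = Df(x⋆)`. Evaluating its quadratic form at a
complex eigenvector `v` of `A` with eigenvalue `μ` gives `(1 - β - |μ|²) v*Sv ≥ 0`, and `v*Sv > 0`,
so `|μ|² ≤ 1 - β < 1`.
-/

open ComplexOrder

namespace Matrix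

variable {ι 𝕜 : Type*} [Fintype ι] [RCLike 𝕜]

lemma PosSemidef.map_ofReal {S : Matrix ι ι ℝ} (hS : S.PosSemidef) :
    (S.map ((↑) : ℝ → 𝕜)).PosSemidef := by
  obtain ⟨m, w, rfl⟩ := posSemidef_iff_eq_sum_vecMulVec.mp hS
  refine posSemidef_iff_eq_sum_vecMulVec.mpr ⟨m, fun k i => (w k i : 𝕜), ?_⟩
  ext i j
  simp [sum_apply, vecMulVec_apply]

lemma PosDef.map_ofReal [DecidableEq ι] {S : Matrix ι ι ℝ} (hS : S.PosDef) :
    (S.map ((↑) : ℝ → 𝕜)).PosDef :=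
  hS.posSemidef.map_ofReal.posDef_iff_isUnit.mpr <|
    hS.isUnit.map (algebraMap ℝ 𝕜).mapMatrix

lemma map_ofReal_smul_sub_transpose_mul_mul (S A : Matrix ι ι ℝ) (c : ℝ) :
    (c • S - Aᵀ * S * A).map ((↑) : ℝ → 𝕜) =
      (c : 𝕜) • S.map (↑) - (A.map (↑))ᴴ * S.map (↑) * A.map ((↑) : ℝ → 𝕜) := by
  rw [← conjTranspose_map _ fun _ => (RCLike.conj_ofReal _).symm,
    conjTranspose_eq_transpose_of_trivial]
  ext i j
  simp [sub_apply, mul_apply]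

lemma star_dotProduct_conjTranspose_mul_mul_mulVec (A S : Matrix ι ι 𝕜) (v : ι → 𝕜) :
    star v ⬝ᵥ (Aᴴ * S * A) *ᵥ v = star (A *ᵥ v) ⬝ᵥ S *ᵥ (A *ᵥ v) := by
  rw [← mulVec_mulVec, ← mulVec_mulVec, dotProduct_mulVec, star_mulVec]

lemma sq_norm_le_of_posSemidef_smul_sub_conjTranspose_mul_mul [DecidableEq ι]
    {S A : Matrix ι ι 𝕜} {c : ℝ} (hS : S.PosDef) (h : ((c : 𝕜) • S - Aᴴ * S * A).PosSemidef)
    {μ : 𝕜} (hμ : μ ∈ spectrum 𝕜 A) : ‖μ‖ ^ 2 ≤ c := by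
  rw [← spectrum_toLin', ← Module.End.hasEigenvalue_iff_mem_spectrum] at hμ
  obtain ⟨v, hv⟩ := hμ.exists_hasEigenvector
  have hAv : A *ᵥ v = μ • v := by simpa using hv.apply_eq_smul
  obtain ⟨r, hr, hq⟩ := RCLike.pos_iff_exists_ofReal.mp (hS.dotProduct_mulVec_pos hv.2)
  have hform : star v ⬝ᵥ ((c : 𝕜) • S - Aᴴ * S * A) *ᵥ v = ((c - ‖μ‖ ^ 2) * r : ℝ) := by
    rw [sub_mulVec, dotProduct_sub, star_dotProduct_conjTranspose_mul_mul_mulVec, hAv,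
      smul_mulVec, dotProduct_smul, star_smul, mulVec_smul, dotProduct_smul, smul_dotProduct, ← hq]
    simp only [smul_eq_mul, RCLike.star_def]
    push_cast
    linear_combination -(r : 𝕜) * RCLike.mul_conj μ
  have hnonneg := h.dotProduct_mulVec_nonneg v
  rw [hform, RCLike.ofReal_nonneg] at hnonneg
  nlinarith

end Matrix

theorem schurStable_of_posSemidef_smul_sub_transpose_mul_mul {N : ℕ}
    {S A : Matrix (Fin N) (Fin N) ℝ} {c : ℝ} (hS : S.PosDef) (hc : c < 1)
    (h : (c • S - Aᵀ * S * A).PosSemidef) : SchurStable A := by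
  intro μ hμ
  have hμ_sq := sq_norm_le_of_posSemidef_smul_sub_conjTranspose_mul_mul (𝕜 := ℂ) hS.map_ofReal
    (map_ofReal_smul_sub_transpose_mul_mul (𝕜 := ℂ) S A c ▸ h.map_ofReal) hμ
  nlinarith [norm_nonneg μ]

theorem stmt8_general {n : ℕ} (f : (Fin n → ℝ) → (Fin n → ℝ))
    (F : (Fin n → ℝ) → Matrix (Fin n) (Fin n) ℝ)
    (M : (Fin n → ℝ) → Matrix (Fin n) (Fin n) ℝ)
    (xstar : Fin n → ℝ) (hfix : f xstar = xstar)
    (β : ℝ) (hβ : β ∈ Set.Ioo (0 : ℝ) 1)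
    (hM : ∀ x, (M x).PosDef)
    (hcontr : ∀ x, ((1 - β) • M x - (F x)ᵀ * M (f x) * F x).PosSemidef) :
    ((1 - β) • M xstar - (F xstar)ᵀ * M xstar * F xstar).PosSemidef ∧
      SchurStable (F xstar) := by
  have hstein := hfix ▸ hcontr xstar
  exact ⟨hstein, schurStable_of_posSemidef_smul_sub_transpose_mul_mul (hM xstar)
    (by linarith [hβ.1]) hstein⟩

theorem stmt8 {n : ℕ} (f : (Fin n → ℝ) → (Fin n → ℝ))
    (F : (Fin n → ℝ) → Matrix (Fin n) (Fin n) ℝ)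
    (M : (Fin n → ℝ) → Matrix (Fin n) (Fin n) ℝ)
    (xstar : Fin n → ℝ) (hfix : f xstar = xstar)
    (β : ℝ) (hβ : β ∈ Set.Ioo (0 : ℝ) 1)
    (hf : ∀ x, HasFDerivAt f (LinearMap.toContinuousLinearMap (F x).mulVecLin) x)
    (hMsymm : ∀ x, (M x)ᵀ = M x) (hM : ∀ x, (M x).PosDef)
    (hcontr : ∀ x, ((1 - β) • M x - (F x)ᵀ * M (f x) * F x).PosSemidef) :
    ((1 - β) • M xstar - (F xstar)ᵀ * M xstar * F xstar).PosSemidef ∧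
      SchurStable (F xstar) :=
  stmt8_general f F M xstar hfix β hβ hM hcontr
end

section
/- Let E, F, P ∈ ℝ^{N×N} with P symmetric. If the block matrix M = [[E + Eᵀ - P, Fᵀ],[F, P]] is positive definite, then E is invertible and E⁻¹F is Schur stable. -/
/-!
The diagonal blocks of `M` give `P ≻ 0` and `E + Eᵀ ≻ P ≻ 0`, so `E` has trivial kernel. The Schur
complement of `P` gives `E + Eᵀ - P - FᵀP⁻¹F ≻ 0`, and adding `(E - P)ᵀP⁻¹(E - P) ⪰ 0` turns this
into the Lyapunov-type inequality `EᵀP⁻¹E - FᵀP⁻¹F ≻ 0`. If `v` is a complex eigenvector of `E⁻¹F`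
with eigenvalue `μ`, then `Fv = μEv`, so this form evaluated at `v` is `(1 - |μ|²)·(Ev)*P⁻¹(Ev)`,
which forces `|μ| < 1`.
-/

open Matrix

open scoped ComplexOrder MatrixOrder

namespace Matrix

theorem conjTranspose_map_ofReal {m n : Type*} (A : Matrix m n ℝ) :
    (A.map Complex.ofReal)ᴴ = Aᵀ.map Complex.ofReal := by
  rw [← conjTranspose_eq_transpose_of_trivial,
    conjTranspose_map _ fun x => (Complex.conj_ofReal x).symm]

variable {m n K 𝕜 : Type*} [Fintype n] [DecidableEq n]

section Field

variable [Field K] [PartialOrder K] [StarRing K]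

theorem PosDef.schur_complement₂₂ [Fintype m] {A : Matrix m m K} {B : Matrix m n K}
    {D : Matrix n n K} (h : (fromBlocks A B Bᴴ D).PosDef) : (A - B * D⁻¹ * Bᴴ).PosDef := by
  have hD : D.PosDef := h.submatrix Sum.inr_injective
  let := hD.isUnit.invertible
  refine .of_dotProduct_mulVec_pos ((IsHermitian.fromBlocks₂₂ A B hD.1).mp h.1) fun x hx => ?_
  have hxy : x ⊕ᵥ -((D⁻¹ * Bᴴ) *ᵥ x) ≠ 0 := fun h0 => hx (funext fun i => congrFun h0 (.inl i))
  have := h.dotProduct_mulVec_pos hxy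
  rwa [dotProduct_mulVec, schur_complement_eq₂₂ A B _ _ hD.1, add_neg_cancel, star_zero,
    zero_vecMul, zero_dotProduct, zero_add, ← dotProduct_mulVec] at this

theorem isUnit_of_posDef_add_conjTranspose {E : Matrix n n K} (h : (E + Eᴴ).PosDef) :
    IsUnit E := by
  rw [isUnit_iff_isUnit_det, isUnit_iff_ne_zero]
  intro hdet
  obtain ⟨v, hv, hEv⟩ := exists_mulVec_eq_zero_iff.mpr hdet
  have := h.dotProduct_mulVec_pos hv
  rw [add_mulVec, dotProduct_add, hEv, dotProduct_mulVec (star v) Eᴴ, ← star_mulVec, hEv] at this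
  simp at this

end Field

section RCLike

variable [RCLike 𝕜]

theorem posDef_conjTranspose_mul_inv_mul_sub_of_fromBlocks {E F P : Matrix n n 𝕜}
    (h : (fromBlocks (E + Eᴴ - P) Fᴴ F P).PosDef) :
    (Eᴴ * P⁻¹ * E - Fᴴ * P⁻¹ * F).PosDef := by
  have hP : P.PosDef := h.submatrix Sum.inr_injective
  let := hP.isUnit.invertible
  have hSchur : (E + Eᴴ - P - Fᴴ * P⁻¹ * F).PosDef := by
    simpa only [conjTranspose_conjTranspose] using
      (show (fromBlocks (E + Eᴴ - P) Fᴴ Fᴴᴴ P).PosDef by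
        rwa [conjTranspose_conjTranspose]).schur_complement₂₂
  have key : Eᴴ * P⁻¹ * E - Fᴴ * P⁻¹ * F
      = (E - P)ᴴ * P⁻¹ * (E - P) + (E + Eᴴ - P - Fᴴ * P⁻¹ * F) := by
    simp only [conjTranspose_sub, hP.1.eq, Matrix.sub_mul, Matrix.mul_sub, Matrix.mul_assoc,
      inv_mul_of_invertible, mul_inv_of_invertible, Matrix.mul_one, Matrix.one_mul]
    abel
  rw [key]
  exact hSchur.posSemidef_add (hP.inv.posSemidef.conjTranspose_mul_mul_same _)

theorem norm_lt_one_of_mem_spectrum_of_lyapunov {A E F W : Matrix n n 𝕜} (hW : W.PosSemidef)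
    (hEF : (Eᴴ * W * E - Fᴴ * W * F).PosDef) (hA : E * A = F) {μ : 𝕜}
    (hμ : μ ∈ spectrum 𝕜 A) : ‖μ‖ < 1 := by
  rw [← spectrum_toLin', ← Module.End.hasEigenvalue_iff_mem_spectrum] at hμ
  obtain ⟨v, hv⟩ := hμ.exists_hasEigenvector
  have hAv : A *ᵥ v = μ • v := hv.apply_eq_smul
  have hFv : F *ᵥ v = μ • (E *ᵥ v) := by rw [← hA, ← mulVec_mulVec, hAv, mulVec_smul]
  have quad : ∀ B : Matrix n n 𝕜,
      star v ⬝ᵥ ((Bᴴ * W * B) *ᵥ v) = star (B *ᵥ v) ⬝ᵥ (W *ᵥ (B *ᵥ v)) := fun B => by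
    rw [← mulVec_mulVec, ← mulVec_mulVec, dotProduct_mulVec, ← star_mulVec]
  set q := RCLike.re (star (E *ᵥ v) ⬝ᵥ (W *ᵥ (E *ᵥ v)))
  have hq : 0 ≤ q := hW.re_dotProduct_nonneg _
  have hform : RCLike.re (star v ⬝ᵥ ((Eᴴ * W * E - Fᴴ * W * F) *ᵥ v)) = (1 - ‖μ‖ ^ 2) * q := by
    rw [sub_mulVec, dotProduct_sub, quad, quad, hFv, mulVec_smul, star_smul, smul_dotProduct,
      dotProduct_smul, smul_eq_mul, smul_eq_mul, ← mul_assoc, RCLike.star_def, RCLike.conj_mul,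
      map_sub, ← RCLike.ofReal_pow, RCLike.re_ofReal_mul]
    ring
  have hpos := hform ▸ hEF.re_dotProduct_pos hv.2
  exact (sq_lt_one_iff₀ (norm_nonneg μ)).mp (sub_pos.mp (pos_of_mul_pos_left hpos hq))

end RCLike

theorem PosSemidef.map_ofReal_s13 {M : Matrix n n ℝ} (hM : M.PosSemidef) :
    (M.map Complex.ofReal).PosSemidef := by
  set B := CFC.sqrt M
  have hB : M = star B * B := by
    rw [(CFC.sqrt_nonneg M).isSelfAdjoint.star_eq, CFC.sqrt_mul_sqrt_self M hM.nonneg]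
  rw [hB, show (star B * B).map Complex.ofReal = (B.map Complex.ofReal)ᴴ * B.map Complex.ofReal by
    rw [conjTranspose_map_ofReal]; exact Matrix.map_mul (f := Complex.ofRealHom)]
  exact posSemidef_conjTranspose_mul_self _

theorem PosDef.map_ofReal_s13 {M : Matrix n n ℝ} (hM : M.PosDef) :
    (M.map Complex.ofReal).PosDef :=
  hM.posSemidef.map_ofReal_s13.posDef_iff_isUnit.mpr (hM.isUnit.map Complex.ofRealHom.mapMatrix)

end Matrix

theorem schurStable_of_lyapunov {N : ℕ} {A E F W : Matrix (Fin N) (Fin N) ℝ}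
    (hW : W.PosSemidef) (hEF : (Eᵀ * W * E - Fᵀ * W * F).PosDef) (hA : E * A = F) :
    SchurStable A := by
  let φ := (Complex.ofRealHom : ℝ →+* ℂ).mapMatrix (m := Fin N)
  have hφ : ∀ X, (φ X)ᴴ = φ Xᵀ := conjTranspose_map_ofReal
  intro μ hμ
  refine norm_lt_one_of_mem_spectrum_of_lyapunov (A := φ A) (E := φ E) (F := φ F) (W := φ W)
    hW.map_ofReal_s13 ?_ (by rw [← hA, map_mul]) hμ
  simp only [hφ, ← map_mul, ← map_sub]
  exact hEF.map_ofReal_s13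

theorem stmt13_general {N : ℕ} (E F P : Matrix (Fin N) (Fin N) ℝ)
    (hM : (Matrix.fromBlocks (E + Eᵀ - P) Fᵀ F P).PosDef) :
    IsUnit E.det ∧ SchurStable (E⁻¹ * F) := by
  simp only [← conjTranspose_eq_transpose_of_trivial] at hM
  have hP : P.PosDef := hM.submatrix Sum.inr_injective
  have hE : IsUnit E.det := (isUnit_iff_isUnit_det E).mp <| isUnit_of_posDef_add_conjTranspose <|
    sub_add_cancel (E + Eᴴ) P ▸ (hM.submatrix Sum.inl_injective).add hP
  refine ⟨hE, schurStable_of_lyapunov (E := E) (F := F) hP.inv.posSemidef ?_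
    (mul_nonsing_inv_cancel_left E F hE)⟩
  simpa only [conjTranspose_eq_transpose_of_trivial] using
    posDef_conjTranspose_mul_inv_mul_sub_of_fromBlocks hM

theorem stmt13 {N : ℕ} (E F P : Matrix (Fin N) (Fin N) ℝ) (hPsymm : Pᵀ = P)
    (hM : (Matrix.fromBlocks (E + Eᵀ - P) Fᵀ F P).PosDef) :
    IsUnit E.det ∧ SchurStable (E⁻¹ * F) :=
  stmt13_general E F P hM
end

section
/- Conversely, if A ∈ ℝ^{N×N} is Schur stable, then there exist E, F, P ∈ ℝ^{N×N} with P symmetric such that A = E⁻¹F and the block matrix [[E + Eᵀ - P, Fᵀ],[F, P]] is positive definite. -/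
/-!
A Lyapunov argument. By Gelfand's formula some power `A ^ k`, `k ≥ 1`, is a strict contraction
in the ℓ² operator norm, i.e. `1 - (A ^ k)ᵀ A ^ k ≻ 0`. The truncated Lyapunov sum
`P = ∑_{j<k} (A ^ j)ᵀ A ^ j` is then positive definite and telescopes to
`P - Aᵀ P A = 1 - (A ^ k)ᵀ A ^ k ≻ 0`. With `E = P` and `F = P A` the block matrix is
`[[P, Aᵀ P], [P A, P]]`, whose Schur complement with respect to the lower right block `P` is
exactly `P - Aᵀ P A`.
-/

open Matrix

open scoped ComplexOrder

open Filter in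
theorem spectrum.eventually_norm_pow_lt_one {A : Type*} [NormedRing A] [NormedAlgebra ℂ A]
    [CompleteSpace A] {a : A} (ha : spectralRadius ℂ a < 1) : ∀ᶠ k in atTop, ‖a ^ k‖ < 1 := by
  filter_upwards [(pow_norm_pow_one_div_tendsto_nhds_spectralRadius a).eventually_lt_const ha,
    eventually_gt_atTop 0] with k hlt hk
  contrapose! hlt
  rw [ENNReal.one_le_ofReal]
  exact Real.one_le_rpow hlt (by positivity)

namespace Matrix

section SchurComplement

variable {𝕜 : Type*} [RCLike 𝕜] {m n : Type*} [Fintype m] [Fintype n] [DecidableEq m]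
  [DecidableEq n]

theorem PosDef.fromBlocks₂₂_posDef_iff (A : Matrix m m 𝕜) (B : Matrix m n 𝕜) {D : Matrix n n 𝕜}
    (hD : D.PosDef) : (fromBlocks A B Bᴴ D).PosDef ↔ (A - B * D⁻¹ * Bᴴ).PosDef := by
  have := hD.isUnit.invertible
  have hdet : (fromBlocks A B Bᴴ D).det = D.det * (A - B * D⁻¹ * Bᴴ).det := by
    rw [det_fromBlocks₂₂, invOf_eq_nonsing_inv]
  constructor
  · intro h
    rw [((hD.fromBlocks₂₂ A B).1 h.posSemidef).posDef_iff_isUnit, isUnit_iff_isUnit_det]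
    exact isUnit_of_mul_isUnit_right (hdet ▸ (isUnit_iff_isUnit_det _).1 h.isUnit)
  · intro h
    rw [((hD.fromBlocks₂₂ A B).2 h.posSemidef).posDef_iff_isUnit, isUnit_iff_isUnit_det, hdet]
    exact ((isUnit_iff_isUnit_det _).1 hD.isUnit).mul ((isUnit_iff_isUnit_det _).1 h.isUnit)

end SchurComplement

section Lyapunov

variable {R : Type*} [CommRing R] [StarRing R] {n : Type*} [Fintype n] [DecidableEq n]

def lyapunovSum (A : Matrix n n R) (k : ℕ) : Matrix n n R :=
  ∑ j ∈ Finset.range k, (A ^ j)ᴴ * A ^ j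

theorem lyapunovSum_sub_conjTranspose_mul_mul (A : Matrix n n R) (k : ℕ) :
    lyapunovSum A k - Aᴴ * lyapunovSum A k * A = 1 - (A ^ k)ᴴ * A ^ k := by
  have hshift :
      Aᴴ * lyapunovSum A k * A = ∑ j ∈ Finset.range k, (A ^ (j + 1))ᴴ * A ^ (j + 1) := by
    rw [lyapunovSum, Finset.mul_sum, Finset.sum_mul]
    refine Finset.sum_congr rfl fun j _ => ?_
    rw [pow_succ, conjTranspose_mul]
    simp only [Matrix.mul_assoc]
  rw [hshift, lyapunovSum, ← Finset.sum_sub_distrib,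
    Finset.sum_range_sub' (fun j => (A ^ j)ᴴ * A ^ j)]
  simp

theorem posDef_lyapunovSum [PartialOrder R] [StarOrderedRing R] [NoZeroDivisors R]
    (A : Matrix n n R) {k : ℕ} (hk : k ≠ 0) : (lyapunovSum A k).PosDef := by
  obtain ⟨k, rfl⟩ := Nat.exists_eq_succ_of_ne_zero hk
  rw [lyapunovSum, Finset.sum_range_succ']
  simp only [pow_zero, conjTranspose_one, Matrix.mul_one]
  exact PosDef.posSemidef_add (posSemidef_sum _ fun j _ => posSemidef_conjTranspose_mul_self _)
    PosDef.one

end Lyapunov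

variable {n : Type*} [Fintype n] [DecidableEq n]

open scoped Matrix.Norms.L2Operator MatrixOrder in
theorem posDef_one_sub_conjTranspose_mul_self {B : Matrix n n ℂ} (hB : ‖B‖ < 1) :
    (1 - Bᴴ * B).PosDef := by
  have hle : (algebraMap ℝ (Matrix n n ℂ) (‖B‖ ^ 2) - Bᴴ * B).PosSemidef :=
    Matrix.le_iff.1 (CStarAlgebra.star_mul_le_algebraMap_norm_sq (a := B))
  have hgap : ((1 - ‖B‖ ^ 2) • (1 : Matrix n n ℂ)).PosDef :=
    PosDef.one.smul (by nlinarith [norm_nonneg B])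
  convert hgap.add_posSemidef hle using 1
  rw [Algebra.algebraMap_eq_smul_one, sub_smul, one_smul]
  abel

omit [DecidableEq n] in
theorem PosDef.of_map_ofReal {R : Matrix n n ℝ} (h : (R.map Complex.ofReal).PosDef) :
    R.PosDef := by
  refine PosDef.of_dotProduct_mulVec_pos ?_ fun x hx => ?_
  · ext i j
    simpa using congr_fun₂ h.isHermitian i j
  · have hx' : Complex.ofRealHom ∘ x ≠ 0 := fun h0 =>
      hx (funext fun i => Complex.ofReal_injective (congr_fun h0 i))
    have hcast : star (Complex.ofRealHom ∘ x) ⬝ᵥ (R.map Complex.ofReal *ᵥ Complex.ofRealHom ∘ x)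
        = Complex.ofRealHom (x ⬝ᵥ (R *ᵥ x)) := by
      rw [RingHom.map_dotProduct]
      congr 1
      · ext i; simp
      · ext i; exact (RingHom.map_mulVec Complex.ofRealHom R x i).symm
    have := h.dotProduct_mulVec_pos hx'
    rw [star_trivial, ← Complex.zero_lt_real]
    rwa [hcast] at this

end Matrix

open scoped Matrix.Norms.L2Operator in
theorem SchurStable.spectralRadius_lt_one {N : ℕ} {A : Matrix (Fin N) (Fin N) ℝ}
    (hA : SchurStable A) : spectralRadius ℂ (A.map Complex.ofReal) < 1 := by
  rcases (spectrum ℂ (A.map Complex.ofReal)).eq_empty_or_nonempty with hempty | hne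
  · simp [spectralRadius, hempty]
  · exact_mod_cast spectrum.spectralRadius_lt_of_forall_lt_of_nonempty hne
      fun μ hμ => by exact_mod_cast hA μ hμ

open scoped Matrix.Norms.L2Operator in
theorem SchurStable.exists_posDef_one_sub_pow {N : ℕ} {A : Matrix (Fin N) (Fin N) ℝ}
    (hA : SchurStable A) : ∃ k ≠ 0, (1 - (A ^ k)ᴴ * A ^ k).PosDef := by
  obtain ⟨k, hnorm, hk⟩ := ((spectrum.eventually_norm_pow_lt_one hA.spectralRadius_lt_one).and
    (Filter.eventually_ne_atTop 0)).exists
  refine ⟨k, hk, PosDef.of_map_ofReal ?_⟩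
  let f : Matrix (Fin N) (Fin N) ℝ →+* Matrix (Fin N) (Fin N) ℂ := Complex.ofRealHom.mapMatrix
  have hstar (B : Matrix (Fin N) (Fin N) ℝ) : f Bᴴ = (f B)ᴴ :=
    conjTranspose_map _ fun _ => (Complex.conj_ofReal _).symm
  change (f (1 - (A ^ k)ᴴ * A ^ k)).PosDef
  rw [map_sub, map_one, map_mul, hstar, map_pow]
  exact posDef_one_sub_conjTranspose_mul_self hnorm

theorem stmt14 {N : ℕ} (A : Matrix (Fin N) (Fin N) ℝ) (hA : SchurStable A) :
    ∃ E F P : Matrix (Fin N) (Fin N) ℝ, Pᵀ = P ∧ A = E⁻¹ * F ∧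
      (Matrix.fromBlocks (E + Eᵀ - P) Fᵀ F P).PosDef := by
  obtain ⟨k, hk, hcontr⟩ := hA.exists_posDef_one_sub_pow
  set P := lyapunovSum A k
  have hP : P.PosDef := posDef_lyapunovSum A hk
  have hPsymm : Pᵀ = P := by simpa using hP.isHermitian.eq
  have hlyap : (P - Aᴴ * P * A).PosDef := by
    rwa [lyapunovSum_sub_conjTranspose_mul_mul]
  have : Invertible P := hP.isUnit.invertible
  refine ⟨P, P * A, P, hPsymm, (inv_mul_cancel_left_of_invertible P A).symm, ?_⟩
  have hblocks : fromBlocks (P + Pᵀ - P) (P * A)ᵀ (P * A) P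
      = fromBlocks P (Aᴴ * P) (Aᴴ * P)ᴴ P := by
    simp [hPsymm, conjTranspose_eq_transpose_of_trivial]
  rw [hblocks, hP.fromBlocks₂₂_posDef_iff]
  rwa [conjTranspose_mul, conjTranspose_conjTranspose, conjTranspose_eq_transpose_of_trivial P,
    hPsymm, Matrix.mul_assoc _ P⁻¹, inv_mul_cancel_left_of_invertible]
end

section
/- For any L ∈ ℝ^{2N×2N}, any R ∈ ℝ^{N×N}, and any ε > 0, the matrix A(L,R) := 2(M₁₁ + M₂₂ + R - Rᵀ)⁻¹ M₂₁ is well-defined (the inverse exists) and Schur stable, where M = LLᵀ + εI is partitioned into N×N blocks M = [[M₁₁, M₁₂],[M₂₁, M₂₂]]. -/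
open Matrix

/-!
Put `E := (M₁₁ + M₂₂ + R - Rᴴ) / 2`. Since `M` is Hermitian, `E + Eᴴ = M₁₁ + M₂₂`, so
`M = [[E + Eᴴ - M₂₂, M₂₁ᴴ], [M₂₁, M₂₂]]`; in particular `E + Eᴴ` is positive definite and `E` is
invertible. If `M₂₁ v = μ E v` with `v ≠ 0`, the quadratic form of `M` at `(v, -μ v)` collapses to
`(1 - |μ|²) v* M₁₁ v`, and positivity of both quadratic forms forces `|μ| < 1`. The real statement
is the case `𝕜 = ℂ` applied to the complexification of `M`.
-/

open scoped ComplexOrder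

namespace Matrix

theorem dotProduct_conjTranspose_mulVec {α n : Type*} [CommSemiring α] [StarRing α] [Fintype n]
    (A : Matrix n n α) (v : n → α) :
    star v ⬝ᵥ Aᴴ *ᵥ v = star (star v ⬝ᵥ A *ᵥ v) := by
  rw [dotProduct_mulVec, vecMul_conjTranspose, star_star, star_dotProduct]

theorem map_nonsing_inv {R S n : Type*} [CommRing R] [CommRing S] [Fintype n] [DecidableEq n]
    (f : R →+* S) {A : Matrix n n R} (hA : IsUnit A.det) : A⁻¹.map f = (A.map f)⁻¹ := by
  refine (inv_eq_left_inv ?_).symm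
  rw [← f.mapMatrix_apply, ← f.mapMatrix_apply, ← map_mul, nonsing_inv_mul _ hA, map_one]

variable {𝕜 : Type*} [RCLike 𝕜] {n : Type*} [Fintype n]

theorem norm_lt_one_of_posDef_fromBlocks_of_mulVec_eq_smul_mulVec {E F P : Matrix n n 𝕜}
    (hM : (fromBlocks (E + Eᴴ - P) Fᴴ F P).PosDef) {μ : 𝕜} {v : n → 𝕜} (hv : v ≠ 0)
    (hFv : F *ᵥ v = μ • E *ᵥ v) : ‖μ‖ < 1 := by
  set a := star v ⬝ᵥ E *ᵥ v
  set p := star v ⬝ᵥ P *ᵥ v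
  have hq : star v ⬝ᵥ (E + Eᴴ - P) *ᵥ v = a + star a - p := by
    rw [sub_mulVec, add_mulVec, dotProduct_sub, dotProduct_add, dotProduct_conjTranspose_mulVec]
  have hf : star v ⬝ᵥ F *ᵥ v = μ * a := by
    rw [hFv, dotProduct_smul, smul_eq_mul]
  have hform : star (Sum.elim v (-μ • v)) ⬝ᵥ fromBlocks (E + Eᴴ - P) Fᴴ F P *ᵥ Sum.elim v (-μ • v)
      = ((1 - ‖μ‖ ^ 2 : ℝ) : 𝕜) * star v ⬝ᵥ (E + Eᴴ - P) *ᵥ v := by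
    have hstar : star (Sum.elim v (-μ • v)) = Sum.elim (star v) (-star μ • star v) := by
      ext (i | i) <;> simp
    rw [hstar, fromBlocks_mulVec, sumElim_dotProduct_sumElim]
    simp only [Sum.elim_comp_inl, Sum.elim_comp_inr, mulVec_smul, dotProduct_add,
      dotProduct_smul, smul_dotProduct, dotProduct_conjTranspose_mulVec, hf, hq, smul_eq_mul]
    rw [RCLike.ofReal_sub, RCLike.ofReal_pow, ← RCLike.conj_mul, ← RCLike.star_def]
    simp only [star_mul', RCLike.ofReal_one]
    ring
  have hw : Sum.elim v (-μ • v) ≠ 0 := fun h => hv (funext fun i => congrFun h (Sum.inl i))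
  have hq_pos : 0 < star v ⬝ᵥ (E + Eᴴ - P) *ᵥ v :=
    (hM.submatrix Sum.inl_injective).dotProduct_mulVec_pos hv
  have hform_pos := hM.dotProduct_mulVec_pos hw
  rw [hform] at hform_pos
  have : (0 : ℝ) < 1 - ‖μ‖ ^ 2 :=
    RCLike.ofReal_pos.mp ((pos_iff_pos_of_mul_pos hform_pos).mpr hq_pos)
  nlinarith [norm_nonneg μ]

variable [DecidableEq n]

theorem posDef_mul_conjTranspose_add_smul_one {m : Type*} [Fintype m] (L : Matrix n m 𝕜)
    {ε : ℝ} (hε : 0 < ε) : (L * Lᴴ + ε • (1 : Matrix n n 𝕜)).PosDef :=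
  PosDef.posSemidef_add (posSemidef_self_mul_conjTranspose L) (PosDef.one.smul hε)

theorem isUnit_det_of_posDef_add_conjTranspose {E : Matrix n n 𝕜} (hE : (E + Eᴴ).PosDef) :
    IsUnit E.det := by
  rw [isUnit_iff_ne_zero]
  intro h
  obtain ⟨v, hv, hEv⟩ := exists_mulVec_eq_zero_iff.mpr h
  have := hE.dotProduct_mulVec_pos hv
  rw [add_mulVec, dotProduct_add, dotProduct_conjTranspose_mulVec, hEv] at this
  simp at this

theorem isUnit_det_of_posDef_fromBlocks {E F P : Matrix n n 𝕜}
    (hM : (fromBlocks (E + Eᴴ - P) Fᴴ F P).PosDef) : IsUnit E.det := by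
  have h₁₁ : (E + Eᴴ - P).PosDef := hM.submatrix Sum.inl_injective
  have h₂₂ : P.PosDef := hM.submatrix Sum.inr_injective
  exact isUnit_det_of_posDef_add_conjTranspose (by simpa using h₁₁.add h₂₂)

theorem norm_lt_one_of_posDef_fromBlocks_of_mem_spectrum {E F P : Matrix n n 𝕜}
    (hM : (fromBlocks (E + Eᴴ - P) Fᴴ F P).PosDef) {μ : 𝕜} (hμ : μ ∈ spectrum 𝕜 (E⁻¹ * F)) :
    ‖μ‖ < 1 := by
  rw [← spectrum_toLin', ← Module.End.hasEigenvalue_iff_mem_spectrum] at hμ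
  obtain ⟨v, hv⟩ := hμ.exists_hasEigenvector
  refine norm_lt_one_of_posDef_fromBlocks_of_mulVec_eq_smul_mulVec hM hv.2 ?_
  have hEv := congrArg (E *ᵥ ·) hv.apply_eq_smul
  simpa [mulVec_mulVec, mulVec_smul, ← mul_assoc,
    mul_nonsing_inv _ (isUnit_det_of_posDef_fromBlocks hM)] using hEv

theorem PosDef.isUnit_det_and_norm_lt_one {M : Matrix (n ⊕ n) (n ⊕ n) 𝕜} (hM : M.PosDef)
    (R : Matrix n n 𝕜) :
    IsUnit (M.toBlocks₁₁ + M.toBlocks₂₂ + R - Rᴴ).det ∧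
      ∀ μ ∈ spectrum 𝕜 ((2 : 𝕜) • ((M.toBlocks₁₁ + M.toBlocks₂₂ + R - Rᴴ)⁻¹ * M.toBlocks₂₁)),
        ‖μ‖ < 1 := by
  set E := (2⁻¹ : 𝕜) • (M.toBlocks₁₁ + M.toBlocks₂₂ + R - Rᴴ)
  have hE₂ : M.toBlocks₁₁ + M.toBlocks₂₂ + R - Rᴴ = (2 : 𝕜) • E := by
    simp [E, smul_smul]
  have hblocks :
      fromBlocks (E + Eᴴ - M.toBlocks₂₂) M.toBlocks₂₁ᴴ M.toBlocks₂₁ M.toBlocks₂₂ = M := by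
    obtain ⟨h₁₁, h₁₂, -, h₂₂⟩ :=
      isHermitian_fromBlocks_iff.mp (M.fromBlocks_toBlocks ▸ hM.isHermitian)
    conv_rhs => rw [← fromBlocks_toBlocks M]
    rw [← h₁₂, conjTranspose_conjTranspose]
    congr 1
    simp only [E, conjTranspose_smul, conjTranspose_sub, conjTranspose_add, h₁₁.eq, h₂₂.eq,
      conjTranspose_conjTranspose, star_inv₀, star_ofNat]
    module
  have hE : IsUnit E.det := isUnit_det_of_posDef_fromBlocks (hblocks ▸ hM)
  refine ⟨?_, fun μ hμ => norm_lt_one_of_posDef_fromBlocks_of_mem_spectrum (hblocks ▸ hM) ?_⟩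
  · rw [hE₂, det_smul]
    exact ((isUnit_of_invertible 2).pow _).mul hE
  · rwa [hE₂, Matrix.inv_smul E (2 : 𝕜) hE, smul_mul_assoc, smul_smul, mul_invOf_self,
      one_smul] at hμ

theorem posDef_map_ofReal_mul_transpose_add_smul_one {m : Type*} [Fintype m]
    (L : Matrix n m ℝ) {ε : ℝ} (hε : 0 < ε) :
    ((L * Lᵀ + ε • (1 : Matrix n n ℝ)).map Complex.ofReal).PosDef := by
  have : (L * Lᵀ + ε • (1 : Matrix n n ℝ)).map Complex.ofReal =
      L.map Complex.ofReal * (L.map Complex.ofReal)ᴴ + ε • (1 : Matrix n n ℂ) := by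
    ext i j; simp [mul_apply, one_apply, apply_ite Complex.ofReal]
  rw [this]
  exact posDef_mul_conjTranspose_add_smul_one _ hε

end Matrix

theorem stmt15 {N : ℕ} (L : Matrix (Fin N ⊕ Fin N) (Fin N ⊕ Fin N) ℝ)
    (R : Matrix (Fin N) (Fin N) ℝ) (ε : ℝ) (hε : 0 < ε) :
    let M := L * Lᵀ + ε • (1 : Matrix (Fin N ⊕ Fin N) (Fin N ⊕ Fin N) ℝ);
    IsUnit (M.toBlocks₁₁ + M.toBlocks₂₂ + R - Rᵀ).det ∧
      SchurStable ((2 : ℝ) • ((M.toBlocks₁₁ + M.toBlocks₂₂ + R - Rᵀ)⁻¹ * M.toBlocks₂₁)) := by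
  intro M
  obtain ⟨hdet, hspec⟩ :=
    (posDef_map_ofReal_mul_transpose_add_smul_one L hε).isUnit_det_and_norm_lt_one
      (R.map Complex.ofReal)
  set E := M.toBlocks₁₁ + M.toBlocks₂₂ + R - Rᵀ
  have hE : (M.map Complex.ofReal).toBlocks₁₁ + (M.map Complex.ofReal).toBlocks₂₂ +
      R.map Complex.ofReal - (R.map Complex.ofReal)ᴴ = E.map Complex.ofReal := by
    ext i j; simp [E, toBlocks₁₁, toBlocks₂₂]
  have hdetE : IsUnit E.det := by
    have : (E.map Complex.ofReal).det = (E.det : ℂ) := (Complex.ofRealHom.map_det E).symm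
    rw [hE, this] at hdet
    simpa using hdet
  have hA : (2 : ℂ) • ((E.map Complex.ofReal)⁻¹ * (M.map Complex.ofReal).toBlocks₂₁) =
      ((2 : ℝ) • (E⁻¹ * M.toBlocks₂₁)).map Complex.ofReal := by
    rw [show (E.map Complex.ofReal)⁻¹ = E⁻¹.map Complex.ofReal from
      (map_nonsing_inv Complex.ofRealHom hdetE).symm]
    ext i j; simp [mul_apply, Finset.mul_sum, toBlocks₂₁]
  exact ⟨hdetE, fun μ hμ => hspec μ (by rwa [hE, hA])⟩
end

section
/- Every Schur stable matrix is realized by the parameterization: if A₀ ∈ ℝ^{N×N} is Schur stable, then there exist L ∈ ℝ^{2N×2N}, R ∈ ℝ^{N×N}, and ε > 0 such that A₀ = 2(M₁₁ + M₂₂ + R - Rᵀ)⁻¹ M₂₁ with M = LLᵀ + εI. -/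
/-!
Gelfand's formula turns Schur stability into a power `A₀ ^ k` of operator norm `< 1`. Then
`P = ∑_{j<k} (A₀ ^ j)ᵀ A₀ ^ j` telescopes to `P - A₀ᵀ P A₀ = 1 - (A₀ ^ k)ᵀ A₀ ^ k ≻ 0`, a discrete
Lyapunov inequality, so by the Schur complement `M = [[P, A₀ᵀ P], [P A₀, P]]` is positive definite.
Hence `M - ε 1 = L Lᵀ` for some `ε > 0`, and with `R = 0` the parameterization returns
`2 (2 P)⁻¹ (P A₀) = A₀`.
-/

open Matrix

theorem exists_pow_norm_lt_one {A : Type*} [NormedRing A] [NormedAlgebra ℂ A] [CompleteSpace A]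
    {a : A} (ha : ∀ z ∈ spectrum ℂ a, ‖z‖ < 1) : ∃ k : ℕ, ‖a ^ k‖ < 1 := by
  cases subsingleton_or_nontrivial A with
  | inl _ => exact ⟨0, by simp [Subsingleton.elim (1 : A) 0]⟩
  | inr _ =>
    have hρ : spectralRadius ℂ a < 1 := by
      simpa using spectrum.spectralRadius_lt_of_forall_lt a (r := 1)
        fun z hz => by simpa [← NNReal.coe_lt_coe] using ha z hz
    obtain ⟨k, hk, hk0⟩ := ((spectrum.pow_norm_pow_one_div_tendsto_nhds_spectralRadius a).eventually
      (gt_mem_nhds hρ)).and (Filter.eventually_gt_atTop 0) |>.exists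
    rw [ENNReal.ofReal_lt_one,
      Real.rpow_lt_one_iff' (norm_nonneg _) (one_div_pos.2 (Nat.cast_pos.2 hk0))] at hk
    exact ⟨k, hk⟩

lemma EuclideanSpace.norm_sq_toLp_ofReal {n : Type*} [Fintype n] (v : n → ℝ) :
    ‖(WithLp.toLp 2 (fun i => (v i : ℂ)) : EuclideanSpace ℂ n)‖ ^ 2 = v ⬝ᵥ v := by
  rw [EuclideanSpace.norm_sq_eq]
  simp [dotProduct, sq]

namespace Matrix

variable {m n : Type*} [Fintype m] [Fintype n] [DecidableEq m] [DecidableEq n]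

open scoped Matrix.Norms.L2Operator in
lemma posDef_one_sub_transpose_mul_self {C : Matrix n n ℝ} (hC : ‖C.map ((↑) : ℝ → ℂ)‖ < 1) :
    (1 - Cᵀ * C).PosDef := by
  refine .of_dotProduct_mulVec_pos (by simp [IsHermitian, transpose_sub]) fun x hx => ?_
  -- `x ⬝ᵥ x - (C x) ⬝ᵥ (C x) = ‖z‖² - ‖C z‖²` for the complexification `z` of `x`.
  set z : EuclideanSpace ℂ n := WithLp.toLp 2 (fun i => (x i : ℂ))
  have hz : z ≠ 0 := fun h => hx (funext fun i => by simpa [z] using congr($h i))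
  have hCz : (EuclideanSpace.equiv n ℂ).symm (C.map (↑) *ᵥ z) =
      WithLp.toLp 2 (fun i => ((C *ᵥ x) i : ℂ)) := by
    ext i
    exact (RingHom.map_mulVec Complex.ofRealHom C x i).symm
  have hlt : ‖(EuclideanSpace.equiv n ℂ).symm (C.map (↑) *ᵥ z)‖ < ‖z‖ :=
    (l2_opNorm_mulVec _ z).trans_lt (mul_lt_of_lt_one_left (norm_pos_iff.mpr hz) hC)
  rw [hCz] at hlt
  have hsq := pow_lt_pow_left₀ hlt (norm_nonneg _) two_ne_zero
  rw [EuclideanSpace.norm_sq_toLp_ofReal, EuclideanSpace.norm_sq_toLp_ofReal] at hsq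
  simpa [sub_mulVec, ← mulVec_mulVec, dotProduct_mulVec, vecMul_transpose] using hsq

lemma sum_pow_sub_transpose_mul_mul {R : Type*} [CommRing R] (A : Matrix n n R) (k : ℕ) :
    (∑ j ∈ Finset.range k, (A ^ j)ᵀ * A ^ j) -
        Aᵀ * (∑ j ∈ Finset.range k, (A ^ j)ᵀ * A ^ j) * A = 1 - (A ^ k)ᵀ * A ^ k := by
  have hshift : ∀ j, Aᵀ * ((A ^ j)ᵀ * A ^ j) * A = (A ^ (j + 1))ᵀ * A ^ (j + 1) := fun j => by
    rw [pow_succ, transpose_mul]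
    simp only [Matrix.mul_assoc]
  rw [Finset.mul_sum, Finset.sum_mul, ← Finset.sum_sub_distrib]
  simp_rw [hshift]
  rw [Finset.sum_range_sub' (fun j => (A ^ j)ᵀ * A ^ j)]
  simp

lemma exists_posDef_sub_transpose_mul_mul_posDef {A : Matrix n n ℝ} {k : ℕ}
    (hk : (1 - (A ^ k)ᵀ * A ^ k).PosDef) :
    ∃ P : Matrix n n ℝ, P.PosDef ∧ (P - Aᵀ * P * A).PosDef := by
  set P := ∑ j ∈ Finset.range k, (A ^ j)ᵀ * A ^ j
  have hP : P.PosSemidef := posSemidef_sum _ fun j _ => by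
    simpa using posSemidef_conjTranspose_mul_self (A ^ j)
  have hLyap : (P - Aᵀ * P * A).PosDef := (sum_pow_sub_transpose_mul_mul A k).symm ▸ hk
  refine ⟨P, ?_, hLyap⟩
  simpa using hLyap.add_posSemidef (hP.conjTranspose_mul_mul_same A)

open scoped ComplexOrder

variable {𝕜 : Type*} [RCLike 𝕜]

lemma PosDef.posDef_fromBlocks₂₂ {D : Matrix n n 𝕜} (hD : D.PosDef) {A : Matrix m m 𝕜}
    (B : Matrix m n 𝕜) (hS : (A - B * D⁻¹ * Bᴴ).PosDef) : (fromBlocks A B Bᴴ D).PosDef := by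
  let := hD.isUnit.invertible
  refine ((hD.fromBlocks₂₂ A B).2 hS.posSemidef).posDef_iff_det_ne_zero.2 ?_
  rw [det_fromBlocks₂₂, invOf_eq_nonsing_inv]
  exact mul_ne_zero hD.det_pos.ne' hS.det_pos.ne'

lemma PosDef.posDef_fromBlocks_of_lyapunov {P A : Matrix n n ℝ} (hP : P.PosDef)
    (hLyap : (P - Aᵀ * P * A).PosDef) : (fromBlocks P (P * A)ᵀ (P * A) P).PosDef := by
  have hschur : (P * A)ᵀ * P⁻¹ * (P * A)ᵀᵀ = Aᵀ * P * A := by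
    rw [transpose_transpose, transpose_mul, ← conjTranspose_eq_transpose_of_trivial P,
      hP.isHermitian.eq]
    simp only [Matrix.mul_assoc]
    rw [← Matrix.mul_assoc P⁻¹, nonsing_inv_mul P hP.det_pos.ne'.isUnit, Matrix.one_mul]
  simp only [← conjTranspose_eq_transpose_of_trivial] at hschur ⊢
  exact conjTranspose_conjTranspose (P * A) ▸ hP.posDef_fromBlocks₂₂ (P * A)ᴴ (hschur ▸ hLyap)

open scoped MatrixOrder in
lemma PosDef.exists_pos_sub_smul_one_posSemidef {M : Matrix n n 𝕜} (hM : M.PosDef) :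
    ∃ ε : ℝ, 0 < ε ∧ (M - ε • 1).PosSemidef := by
  cases isEmpty_or_nonempty n with
  | inl _ => exact ⟨1, one_pos, Subsingleton.elim (M - (1 : ℝ) • 1) 0 ▸ .zero⟩
  | inr _ =>
    obtain ⟨ε, hε, hle⟩ := (CFC.exists_pos_algebraMap_le_iff hM.isHermitian).2
      fun x hx => hM.isStrictlyPositive.spectrum_pos hx
    exact ⟨ε, hε, by simpa [le_iff, Algebra.algebraMap_eq_smul_one] using hle⟩

open scoped MatrixOrder in
lemma PosSemidef.exists_eq_mul_transpose {M : Matrix n n ℝ} (hM : M.PosSemidef) :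
    ∃ L : Matrix n n ℝ, M = L * Lᵀ := by
  refine ⟨CFC.sqrt M, ?_⟩
  rw [← conjTranspose_eq_transpose_of_trivial, (CFC.sqrt_nonneg M).posSemidef.isHermitian.eq,
    CFC.sqrt_mul_sqrt_self M hM.nonneg]

end Matrix

open scoped Matrix.Norms.L2Operator in
lemma SchurStable.exists_lyapunov {N : ℕ} {A : Matrix (Fin N) (Fin N) ℝ} (hA : SchurStable A) :
    ∃ P : Matrix (Fin N) (Fin N) ℝ, P.PosDef ∧ (P - Aᵀ * P * A).PosDef := by
  obtain ⟨k, hk⟩ := exists_pow_norm_lt_one hA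
  refine exists_posDef_sub_transpose_mul_mul_posDef (k := k) (posDef_one_sub_transpose_mul_self ?_)
  convert hk using 2
  exact map_pow (Complex.ofRealHom.mapMatrix (m := Fin N)) A k

theorem stmt16 {N : ℕ} (A₀ : Matrix (Fin N) (Fin N) ℝ) (hA₀ : SchurStable A₀) :
    ∃ (L : Matrix (Fin N ⊕ Fin N) (Fin N ⊕ Fin N) ℝ)
      (R : Matrix (Fin N) (Fin N) ℝ) (ε : ℝ), 0 < ε ∧
      A₀ = (2 : ℝ) •
        ((((L * Lᵀ + ε • (1 : Matrix (Fin N ⊕ Fin N) (Fin N ⊕ Fin N) ℝ)).toBlocks₁₁ +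
            (L * Lᵀ + ε • (1 : Matrix (Fin N ⊕ Fin N) (Fin N ⊕ Fin N) ℝ)).toBlocks₂₂ +
            R - Rᵀ)⁻¹) *
          (L * Lᵀ + ε • (1 : Matrix (Fin N ⊕ Fin N) (Fin N ⊕ Fin N) ℝ)).toBlocks₂₁) := by
  obtain ⟨P, hP, hLyap⟩ := hA₀.exists_lyapunov
  obtain ⟨ε, hε, hMε⟩ := (hP.posDef_fromBlocks_of_lyapunov hLyap).exists_pos_sub_smul_one_posSemidef
  obtain ⟨L, hL⟩ := hMε.exists_eq_mul_transpose
  refine ⟨L, 0, ε, hε, ?_⟩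
  rw [← hL, sub_add_cancel, toBlocks_fromBlocks₁₁, toBlocks_fromBlocks₂₂, toBlocks_fromBlocks₂₁,
    transpose_zero, add_zero, sub_zero, ← two_smul ℝ P]
  have h2P : IsUnit ((2 : ℝ) • P).det := (hP.smul two_pos).det_pos.ne'.isUnit
  rw [← Matrix.mul_smul, ← Matrix.smul_mul, ← Matrix.mul_assoc, nonsing_inv_mul _ h2P,
    Matrix.one_mul]
end
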